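/- For any two distinct bases (u,v) ≠ (u',v') in {0,1}² of 8-state encoding, and any g, g' ∈ {0,1}, the overlap satisfies |⟨u,v,g | u',v',g'⟩|² = 1/3 or 2/3; in particular the four bases of 8-state encoding are not mutually unbiased (since mutual unbiasedness for qubits requires all overlaps squared to equal 1/2). -/

import Mathlib

open Matrix Complex Finset

noncomputable def σx : Matrix (Fin 2) (Fin 2) ℂ := !![0, 1; 1, 0]
noncomputable def σz : Matrix (Fin 2) (Fin 2) ℂ := !![1, 0; 0, -1]

noncomputable def ang : ℝ := Real.arccos (1 / Real.sqrt 3)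
noncomputable def sqrtI : ℂ := Complex.exp (Real.pi * Complex.I / 4)

noncomputable def ψ8 : Fin 2 → Fin 2 → ℂ :=
  ![![(Real.cos (ang / 2) : ℂ), sqrtI * (Real.sin (ang / 2) : ℂ)],
    ![(Real.sin (ang / 2) : ℂ), -(sqrtI * (Real.cos (ang / 2) : ℂ))]]

noncomputable def state8 (u v g : Fin 2) : Fin 2 → ℂ :=
  (σz ^ (u : ℕ) * σx ^ (v : ℕ)).mulVec (ψ8 g)

/-- The squared overlap `|⟨u,v,g|u',v',g'⟩|²` between two of the eight states. -/
noncomputable def overlapSq (u v g u' v' g' : Fin 2) : ℝ :=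
  ‖∑ i : Fin 2, (starRingEnd ℂ) (state8 u v g i) * state8 u' v' g' i‖ ^ 2

/-!
The eight states are the vertices of a cube inscribed in the Bloch sphere: `ψ₀` and `ψ₁` have
Bloch vectors `±(1,1,1)/√3`, and `σx`, `σz` act on Bloch vectors by flipping the signs of two
coordinates. The two states of a basis are antipodal, so the four bases are the four main
diagonals of the cube, and Bloch vectors on distinct diagonals have inner product `±1/3`.
As `|⟨x|y⟩|² = (1 + r_x · r_y) / 2` for unit vectors with Bloch vectors `r_x`, `r_y`, the overlaps
between distinct bases are `(1 ∓ 1/3) / 2`, never `1/2`.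
-/

def blochVector (x : Fin 2 → ℂ) : Fin 3 → ℝ :=
  ![2 * (starRingEnd ℂ (x 0) * x 1).re, 2 * (starRingEnd ℂ (x 0) * x 1).im,
    normSq (x 0) - normSq (x 1)]

def qubitNormSq (x : Fin 2 → ℂ) : ℝ := normSq (x 0) + normSq (x 1)

theorem two_mul_sq_norm_star_dotProduct (x y : Fin 2 → ℂ) :
    2 * ‖star x ⬝ᵥ y‖ ^ 2 = qubitNormSq x * qubitNormSq y + blochVector x ⬝ᵥ blochVector y := by
  simp only [dotProduct, Fin.sum_univ_two, Fin.sum_univ_three, blochVector, qubitNormSq,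
    Complex.sq_norm, Pi.star_apply, Complex.star_def, normSq_apply, add_re, add_im, mul_re,
    mul_im, conj_re, conj_im, cons_val_zero, cons_val_one, cons_val_two, head_cons, tail_cons]
  ring

theorem σx_mulVec (x : Fin 2 → ℂ) : σx *ᵥ x = ![x 1, x 0] := by
  ext i; fin_cases i <;> simp [σx, vecHead, vecTail]

theorem σz_mulVec (x : Fin 2 → ℂ) : σz *ᵥ x = ![x 0, -x 1] := by
  ext i; fin_cases i <;> simp [σz, vecHead, vecTail]

theorem blochVector_σx_mulVec (x : Fin 2 → ℂ) :
    blochVector (σx *ᵥ x) = ![1, -1, -1] * blochVector x := by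
  rw [σx_mulVec]
  ext i; fin_cases i <;> simp [blochVector] <;> ring

theorem blochVector_σz_mulVec (x : Fin 2 → ℂ) :
    blochVector (σz *ᵥ x) = ![-1, -1, 1] * blochVector x := by
  rw [σz_mulVec]
  ext i; fin_cases i <;> simp [blochVector] <;> ring

theorem qubitNormSq_σx_mulVec (x : Fin 2 → ℂ) : qubitNormSq (σx *ᵥ x) = qubitNormSq x := by
  rw [σx_mulVec]
  simp [qubitNormSq, add_comm]

theorem qubitNormSq_σz_mulVec (x : Fin 2 → ℂ) : qubitNormSq (σz *ᵥ x) = qubitNormSq x := by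
  rw [σz_mulVec]
  simp [qubitNormSq]

theorem blochVector_σx_pow_mulVec (n : ℕ) (x : Fin 2 → ℂ) :
    blochVector (σx ^ n *ᵥ x) = ![1, (-1) ^ n, (-1) ^ n] * blochVector x := by
  induction n with
  | zero => ext i; fin_cases i <;> simp
  | succ n ih =>
    rw [pow_succ', ← mulVec_mulVec, blochVector_σx_mulVec, ih]
    ext i; fin_cases i <;> simp [pow_succ]

theorem blochVector_σz_pow_mulVec (n : ℕ) (x : Fin 2 → ℂ) :
    blochVector (σz ^ n *ᵥ x) = ![(-1) ^ n, (-1) ^ n, 1] * blochVector x := by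
  induction n with
  | zero => ext i; fin_cases i <;> simp
  | succ n ih =>
    rw [pow_succ', ← mulVec_mulVec, blochVector_σz_mulVec, ih]
    ext i; fin_cases i <;> simp [pow_succ]

theorem qubitNormSq_σx_pow_mulVec (n : ℕ) (x : Fin 2 → ℂ) :
    qubitNormSq (σx ^ n *ᵥ x) = qubitNormSq x := by
  induction n with
  | zero => simp
  | succ n ih => rw [pow_succ', ← mulVec_mulVec, qubitNormSq_σx_mulVec, ih]

theorem qubitNormSq_σz_pow_mulVec (n : ℕ) (x : Fin 2 → ℂ) :
    qubitNormSq (σz ^ n *ᵥ x) = qubitNormSq x := by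
  induction n with
  | zero => simp
  | succ n ih => rw [pow_succ', ← mulVec_mulVec, qubitNormSq_σz_mulVec, ih]

def signVector (u v : ℕ) : Fin 3 → ℝ := ![(-1) ^ u, (-1) ^ (u + v), (-1) ^ v]

theorem blochVector_pauli_mulVec (u v : ℕ) (x : Fin 2 → ℂ) :
    blochVector ((σz ^ u * σx ^ v) *ᵥ x) = signVector u v * blochVector x := by
  rw [← mulVec_mulVec, blochVector_σz_pow_mulVec, blochVector_σx_pow_mulVec]
  ext i; fin_cases i <;> simp [signVector, pow_add, mul_assoc]

theorem qubitNormSq_pauli_mulVec (u v : ℕ) (x : Fin 2 → ℂ) :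
    qubitNormSq ((σz ^ u * σx ^ v) *ᵥ x) = qubitNormSq x := by
  rw [← mulVec_mulVec, qubitNormSq_σz_pow_mulVec, qubitNormSq_σx_pow_mulVec]

theorem signVector_dotProduct_of_ne {u v u' v' : Fin 2} (h : (u, v) ≠ (u', v')) :
    signVector u v ⬝ᵥ signVector u' v' = -1 := by
  fin_cases u <;> fin_cases v <;> fin_cases u' <;> fin_cases v' <;>
    simp_all [signVector, dotProduct, Fin.sum_univ_three]

theorem blochVector_polar (θ φ : ℝ) :
    blochVector ![(Real.cos (θ / 2) : ℂ), exp (φ * I) * (Real.sin (θ / 2) : ℂ)] =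
      ![Real.sin θ * Real.cos φ, Real.sin θ * Real.sin φ, Real.cos θ] := by
  obtain ⟨t, rfl⟩ : ∃ t, θ = 2 * t := ⟨θ / 2, by ring⟩
  rw [mul_div_cancel_left₀ t two_ne_zero, Real.sin_two_mul, Real.cos_two_mul', exp_mul_I,
    ← ofReal_cos, ← ofReal_sin]
  ext i; fin_cases i <;> simp [blochVector, normSq_apply, -ofReal_cos, -ofReal_sin]
  exacts [by ring, by ring, by linear_combination -Real.sin t ^ 2 * Real.sin_sq_add_cos_sq φ]

theorem blochVector_polar_antipode (θ φ : ℝ) :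
    blochVector ![(Real.sin (θ / 2) : ℂ), -(exp (φ * I) * (Real.cos (θ / 2) : ℂ))] =
      -![Real.sin θ * Real.cos φ, Real.sin θ * Real.sin φ, Real.cos θ] := by
  obtain ⟨t, rfl⟩ : ∃ t, θ = 2 * t := ⟨θ / 2, by ring⟩
  rw [mul_div_cancel_left₀ t two_ne_zero, Real.sin_two_mul, Real.cos_two_mul', exp_mul_I,
    ← ofReal_cos, ← ofReal_sin]
  ext i; fin_cases i <;> simp [blochVector, normSq_apply, -ofReal_cos, -ofReal_sin]
  exacts [by ring, by ring, by linear_combination -Real.cos t ^ 2 * Real.sin_sq_add_cos_sq φ]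

theorem qubitNormSq_polar (θ φ : ℝ) :
    qubitNormSq ![(Real.cos (θ / 2) : ℂ), exp (φ * I) * (Real.sin (θ / 2) : ℂ)] = 1 := by
  simp [qubitNormSq, normSq_eq_norm_sq, norm_exp_ofReal_mul_I, -ofReal_cos, -ofReal_sin]

theorem qubitNormSq_polar_antipode (θ φ : ℝ) :
    qubitNormSq ![(Real.sin (θ / 2) : ℂ), -(exp (φ * I) * (Real.cos (θ / 2) : ℂ))] = 1 := by
  simp [qubitNormSq, normSq_eq_norm_sq, norm_exp_ofReal_mul_I, -ofReal_cos, -ofReal_sin]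

theorem ψ8_zero : ψ8 0 =
    ![(Real.cos (ang / 2) : ℂ), exp (↑(Real.pi / 4) * I) * (Real.sin (ang / 2) : ℂ)] := by
  rw [ψ8, sqrtI]; push_cast; ring_nf

theorem ψ8_one : ψ8 1 =
    ![(Real.sin (ang / 2) : ℂ), -(exp (↑(Real.pi / 4) * I) * (Real.cos (ang / 2) : ℂ))] := by
  rw [ψ8, sqrtI]; push_cast; ring_nf

theorem cos_ang : Real.cos ang = 1 / √3 :=
  Real.cos_arccos (by linarith [show 0 < 1 / √3 by positivity])
    (div_le_one_of_le₀ (Real.one_le_sqrt.mpr (by norm_num)) (by positivity))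

theorem sin_ang_mul_sqrt_two_div_two : Real.sin ang * (√2 / 2) = 1 / √3 := by
  have h3 : √3 ^ 2 = 3 := Real.sq_sqrt (by norm_num)
  have h2 : √2 ^ 2 = 2 := Real.sq_sqrt (by norm_num)
  rw [ang, Real.sin_arccos, div_pow, h3,
    show (1 : ℝ) - 1 ^ 2 / 3 = 2 / 3 by norm_num, Real.sqrt_div' _ (by norm_num : (0 : ℝ) ≤ 3)]
  field_simp
  rw [h2]

theorem blochVector_ψ8 (g : Fin 2) : blochVector (ψ8 g) = fun _ => (-1) ^ (g : ℕ) / √3 := by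
  match g with
  | 0 =>
    rw [ψ8_zero, blochVector_polar]
    ext i; fin_cases i <;> simp [sin_ang_mul_sqrt_two_div_two, cos_ang]
  | 1 =>
    rw [ψ8_one, blochVector_polar_antipode]
    ext i; fin_cases i <;> simp [sin_ang_mul_sqrt_two_div_two, cos_ang, neg_div]

theorem qubitNormSq_ψ8 (g : Fin 2) : qubitNormSq (ψ8 g) = 1 := by
  match g with
  | 0 => rw [ψ8_zero, qubitNormSq_polar]
  | 1 => rw [ψ8_one, qubitNormSq_polar_antipode]

theorem blochVector_state8 (u v g : Fin 2) :
    blochVector (state8 u v g) = ((-1) ^ (g : ℕ) / √3) • signVector u v := by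
  rw [state8, blochVector_pauli_mulVec, blochVector_ψ8]
  ext i; simp [mul_comm]

theorem qubitNormSq_state8 (u v g : Fin 2) : qubitNormSq (state8 u v g) = 1 := by
  rw [state8, qubitNormSq_pauli_mulVec, qubitNormSq_ψ8]

theorem overlapSq_eq (u v g u' v' g' : Fin 2) :
    overlapSq u v g u' v' g' =
      (1 + (-1) ^ (g + g' : ℕ) / 3 * (signVector u v ⬝ᵥ signVector u' v')) / 2 := by
  have h := two_mul_sq_norm_star_dotProduct (state8 u v g) (state8 u' v' g')
  rw [qubitNormSq_state8, qubitNormSq_state8, blochVector_state8, blochVector_state8,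
    smul_dotProduct, dotProduct_smul, smul_eq_mul, smul_eq_mul] at h
  have h3 : √3 ^ 2 = 3 := Real.sq_sqrt (by norm_num)
  change ‖star (state8 u v g) ⬝ᵥ state8 u' v' g'‖ ^ 2 = _
  rw [eq_div_iff two_ne_zero, mul_comm, h, pow_add]
  field_simp
  rw [h3]
  ring

theorem overlapSq_of_ne {u v u' v' : Fin 2} (h : (u, v) ≠ (u', v')) (g g' : Fin 2) :
    overlapSq u v g u' v' g' = if g = g' then 1 / 3 else 2 / 3 := by
  rw [overlapSq_eq, signVector_dotProduct_of_ne h]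
  fin_cases g <;> fin_cases g' <;> norm_num

theorem eight_state_bases_not_mutually_unbiased :
    (∀ u v u' v' : Fin 2, (u, v) ≠ (u', v') → ∀ g g' : Fin 2,
      overlapSq u v g u' v' g' = 1/3 ∨ overlapSq u v g u' v' g' = 2/3) ∧
    ¬ (∀ u v u' v' : Fin 2, (u, v) ≠ (u', v') → ∀ g g' : Fin 2,
      overlapSq u v g u' v' g' = 1/2) := by
  refine ⟨fun u v u' v' h g g' => ?_, fun h => ?_⟩
  · rw [overlapSq_of_ne h]
    split_ifs <;> simp
  · have h₀ := h 0 0 0 1 (by decide) 0 0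
    rw [overlapSq_of_ne (by decide)] at h₀
    norm_num at h₀
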